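/- For integers n, m ≥ 5, the set V(K_n × K_m) \ {(1,1),(2,2),(3,3),(4,4)} is a total mutual-visibility set of K_n × K_m; consequently μ_t(K_n × K_m) ≥ nm − 4. -/

import Mathlib

namespace MutualVisibility

open SimpleGraph

variable {V W : Type*}

/-- `x` and `y` are `X`-visible in `G`: there is a shortest `x,y`-path all of whose
internal vertices avoid `X`. -/
def Visible (G : SimpleGraph V) (X : Set V) (x y : V) : Prop :=
  ∃ p : G.Walk x y, p.length = G.dist x y ∧ ∀ v ∈ p.support, v ≠ x → v ≠ y → v ∉ X

/-- `X` is a mutual-visibility set: any two vertices of `X` are `X`-visible. -/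
def IsMutualVisSet (G : SimpleGraph V) (X : Set V) : Prop :=
  ∀ x ∈ X, ∀ y ∈ X, Visible G X x y

/-- outer mutual-visibility set -/
def IsOuterMutualVisSet (G : SimpleGraph V) (X : Set V) : Prop :=
  IsMutualVisSet G X ∧ ∀ x ∈ X, ∀ y ∉ X, Visible G X x y

/-- dual mutual-visibility set -/
def IsDualMutualVisSet (G : SimpleGraph V) (X : Set V) : Prop :=
  IsMutualVisSet G X ∧ ∀ x ∉ X, ∀ y ∉ X, Visible G X x y

/-- total mutual-visibility set -/
def IsTotalMutualVisSet (G : SimpleGraph V) (X : Set V) : Prop :=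
  ∀ x y : V, Visible G X x y

/-- mutual-visibility number μ(G) -/
noncomputable def mu (G : SimpleGraph V) : ℕ :=
  sSup {k | ∃ X : Set V, IsMutualVisSet G X ∧ X.ncard = k}

/-- outer mutual-visibility number μ_o(G) -/
noncomputable def muOuter (G : SimpleGraph V) : ℕ :=
  sSup {k | ∃ X : Set V, IsOuterMutualVisSet G X ∧ X.ncard = k}

/-- dual mutual-visibility number μ_d(G) -/
noncomputable def muDual (G : SimpleGraph V) : ℕ :=
  sSup {k | ∃ X : Set V, IsDualMutualVisSet G X ∧ X.ncard = k}

/-- total mutual-visibility number μ_t(G) -/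
noncomputable def muTotal (G : SimpleGraph V) : ℕ :=
  sSup {k | ∃ X : Set V, IsTotalMutualVisSet G X ∧ X.ncard = k}

/-- `H` contains a subgraph copy of `F`. -/
def ContainsCopy (F : SimpleGraph W) (H : SimpleGraph V) : Prop :=
  ∃ f : W → V, Function.Injective f ∧ ∀ a b, F.Adj a b → H.Adj (f a) (f b)

/-- The Turán number ex(n; F): max number of edges of an `n`-vertex graph with no copy of `F`. -/
noncomputable def exNum (n : ℕ) (F : SimpleGraph W) : ℕ :=
  sSup {k | ∃ H : SimpleGraph (Fin n), ¬ ContainsCopy F H ∧ H.edgeSet.ncard = k}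

/-- The direct (tensor/categorical) product of graphs. -/
def directProd (G : SimpleGraph V) (H : SimpleGraph W) : SimpleGraph (V × W) where
  Adj x y := G.Adj x.1 y.1 ∧ H.Adj x.2 y.2
  symm := ⟨fun _ _ h => ⟨h.1.symm, h.2.symm⟩⟩
  loopless := ⟨fun x h => G.irrefl h.1⟩

/-- The join `G + H` of two graphs. -/
def graphJoin (G : SimpleGraph V) (H : SimpleGraph W) : SimpleGraph (V ⊕ W) where
  Adj u v := match u, v with
    | Sum.inl a, Sum.inl b => G.Adj a b
    | Sum.inr a, Sum.inr b => H.Adj a b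
    | _, _ => True
  symm := ⟨fun u v => match u, v with
    | Sum.inl _, Sum.inl _ => fun h => G.adj_symm h
    | Sum.inr _, Sum.inr _ => fun h => H.adj_symm h
    | Sum.inl _, Sum.inr _ => fun _ => trivial
    | Sum.inr _, Sum.inl _ => fun _ => trivial⟩
  loopless := ⟨fun u => match u with
    | Sum.inl a => G.irrefl
    | Sum.inr a => H.irrefl⟩

/-- A big-μ graph: `G = (K_1 ∪ K_t) + H` for some `t ≥ 0` and some graph `H`. -/
def IsBigMu {V : Type} (G : SimpleGraph V) : Prop :=
  ∃ (t : ℕ) (W : Type) (H : SimpleGraph W),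
    Nonempty (G ≃g graphJoin ((⊤ : SimpleGraph (Fin 1)) ⊕g (⊤ : SimpleGraph (Fin t))) H)

/-- A cograph: a graph with no induced path on four vertices. -/
def IsCograph (G : SimpleGraph V) : Prop :=
  ¬ ∃ f : Fin 4 → V, Function.Injective f ∧
      ∀ a b, (pathGraph 4).Adj a b ↔ G.Adj (f a) (f b)

/-- The Petersen graph, realized as the Kneser graph K(5,2). -/
def petersen : SimpleGraph {s : Finset (Fin 5) // s.card = 2} where
  Adj a b := Disjoint a.1 b.1
  symm := ⟨fun _ _ h => h.symm⟩
  loopless := by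
    constructor
    rintro ⟨s, hs⟩ h
    rw [disjoint_self, Finset.bot_eq_empty] at h
    subst h
    simp at hs

/-!
Two distinct non-adjacent vertices of `K_n × K_m` share a coordinate, so they are at distance
two, and any vertex differing from both of them in each coordinate is a common neighbour. The four
removed diagonal vertices form a clique, i.e. they pairwise differ in both coordinates, so each of
the three coordinate values to be avoided rules out at most one of them; the remaining one is a
common neighbour outside the set and gives a shortest path whose interior avoids it.
-/

lemma visible_self (G : SimpleGraph V) (X : Set V) (x : V) : Visible G X x x :=
  ⟨.nil, by simp, fun v hv hvx _ => absurd (Walk.mem_support_nil_iff.mp hv) hvx⟩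

lemma visible_of_adj {G : SimpleGraph V} (X : Set V) {x y : V} (h : G.Adj x y) :
    Visible G X x y := by
  refine ⟨.cons h .nil, by simp [dist_eq_one_iff_adj.mpr h], fun v hv hvx hvy => ?_⟩
  simp only [Walk.support_cons, Walk.support_nil, List.mem_cons, List.not_mem_nil,
    or_false] at hv
  exact (hv.elim hvx hvy).elim

lemma visible_of_adj_of_adj {G : SimpleGraph V} {X : Set V} {x y z : V} (hne : x ≠ y)
    (hxy : ¬G.Adj x y) (hxz : G.Adj x z) (hzy : G.Adj z y) (hz : z ∉ X) :
    Visible G X x y := by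
  let p : G.Walk x y := .cons hxz (.cons hzy .nil)
  have hdist : G.dist x y = 2 :=
    le_antisymm (dist_le p) (p.reachable.one_lt_dist_of_ne_of_not_adj hne hxy)
  refine ⟨p, by simp [p, hdist], fun v hv hvx hvy => ?_⟩
  simp only [p, Walk.support_cons, Walk.support_nil, List.mem_cons, List.not_mem_nil,
    or_false] at hv
  rcases hv with rfl | rfl | rfl
  exacts [(hvx rfl).elim, hz, (hvy rfl).elim]

lemma isTotalMutualVisSet_of_exists_common_adj {G : SimpleGraph V} {X : Set V}
    (h : ∀ x y, x ≠ y → ¬G.Adj x y → ∃ z ∉ X, G.Adj x z ∧ G.Adj z y) :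
    IsTotalMutualVisSet G X := by
  intro x y
  by_cases hne : x = y
  · exact hne ▸ visible_self G X x
  by_cases hxy : G.Adj x y
  · exact visible_of_adj X hxy
  obtain ⟨z, hz, hxz, hzy⟩ := h x y hne hxy
  exact visible_of_adj_of_adj hne hxy hxz hzy hz

lemma le_muTotal [Finite V] {G : SimpleGraph V} {X : Set V} (h : IsTotalMutualVisSet G X) :
    X.ncard ≤ muTotal G :=
  le_csSup ⟨Nat.card V, fun _ ⟨Y, _, hY⟩ => hY ▸ Set.ncard_le_card Y⟩ ⟨X, h, rfl⟩

lemma exists_mem_not_of_three_lt_card {α : Type*} {s : Finset α} {P Q R : α → Prop}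
    [DecidablePred P] [DecidablePred Q] [DecidablePred R] (hs : 3 < s.card)
    (hP : (s.filter P).card ≤ 1) (hQ : (s.filter Q).card ≤ 1) (hR : (s.filter R).card ≤ 1) :
    ∃ z ∈ s, ¬P z ∧ ¬Q z ∧ ¬R z := by
  classical
  by_contra! hcover
  have hsub : s ⊆ s.filter P ∪ s.filter Q ∪ s.filter R := by
    intro z hz
    by_cases hPz : P z
    · simp [hz, hPz]
    by_cases hQz : Q z
    · simp [hz, hQz]
    simp [hz, hcover z hz hPz hQz]
  have h₁ := Finset.card_le_card hsub
  have h₂ := Finset.card_union_le (s.filter P ∪ s.filter Q) (s.filter R)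
  have h₃ := Finset.card_union_le (s.filter P) (s.filter Q)
  omega

lemma directProd_top_adj {x y : V × W} :
    (directProd (⊤ : SimpleGraph V) (⊤ : SimpleGraph W)).Adj x y ↔ x.1 ≠ y.1 ∧ x.2 ≠ y.2 := by
  simp [directProd]

lemma card_filter_fst_eq_le_one [DecidableEq V] {s : Finset (V × W)}
    (hs : (directProd (⊤ : SimpleGraph V) (⊤ : SimpleGraph W)).IsClique (s : Set (V × W)))
    (a : V) : (s.filter (·.1 = a)).card ≤ 1 := by
  refine Finset.card_le_one.mpr fun z hz w hw => ?_
  simp only [Finset.mem_filter] at hz hw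
  by_contra hzw
  exact (directProd_top_adj.mp (hs hz.1 hw.1 hzw)).1 (hz.2.trans hw.2.symm)

lemma card_filter_snd_eq_le_one [DecidableEq W] {s : Finset (V × W)}
    (hs : (directProd (⊤ : SimpleGraph V) (⊤ : SimpleGraph W)).IsClique (s : Set (V × W)))
    (b : W) : (s.filter (·.2 = b)).card ≤ 1 := by
  refine Finset.card_le_one.mpr fun z hz w hw => ?_
  simp only [Finset.mem_filter] at hz hw
  by_contra hzw
  exact (directProd_top_adj.mp (hs hz.1 hw.1 hzw)).2 (hz.2.trans hw.2.symm)

lemma exists_mem_clique_adj_adj {s : Finset (V × W)}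
    (hs : (directProd (⊤ : SimpleGraph V) (⊤ : SimpleGraph W)).IsClique (s : Set (V × W)))
    (hcard : 4 ≤ s.card) {x y : V × W} (hxy : x.1 = y.1 ∨ x.2 = y.2) :
    ∃ z ∈ s, (directProd ⊤ ⊤).Adj x z ∧ (directProd ⊤ ⊤).Adj z y := by
  classical
  simp only [directProd_top_adj]
  rcases hxy with h | h
  · obtain ⟨z, hz, h₁, h₂, h₃⟩ := exists_mem_not_of_three_lt_card hcard
      (card_filter_fst_eq_le_one hs x.1) (card_filter_snd_eq_le_one hs x.2)
      (card_filter_snd_eq_le_one hs y.2)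
    exact ⟨z, hz, ⟨Ne.symm h₁, Ne.symm h₂⟩, h ▸ h₁, h₃⟩
  · obtain ⟨z, hz, h₁, h₂, h₃⟩ := exists_mem_not_of_three_lt_card hcard
      (card_filter_snd_eq_le_one hs x.2) (card_filter_fst_eq_le_one hs x.1)
      (card_filter_fst_eq_le_one hs y.1)
    exact ⟨z, hz, ⟨Ne.symm h₂, Ne.symm h₁⟩, h₃, h ▸ h₁⟩

theorem isTotalMutualVisSet_directProd_top_compl_clique {s : Finset (V × W)}
    (hs : (directProd (⊤ : SimpleGraph V) (⊤ : SimpleGraph W)).IsClique (s : Set (V × W)))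
    (hcard : 4 ≤ s.card) :
    IsTotalMutualVisSet (directProd ⊤ ⊤) (s : Set (V × W))ᶜ := by
  refine isTotalMutualVisSet_of_exists_common_adj fun x y _ hxy => ?_
  have hshare : x.1 = y.1 ∨ x.2 = y.2 := by
    rw [directProd_top_adj] at hxy
    tauto
  obtain ⟨z, hz, hxz, hzy⟩ := exists_mem_clique_adj_adj hs hcard hshare
  exact ⟨z, not_not.mpr hz, hxz, hzy⟩

theorem total_mv_set_directProd_complete (n m : ℕ) (hn : 5 ≤ n) (hm : 5 ≤ m) :
    IsTotalMutualVisSet (directProd (⊤ : SimpleGraph (Fin n)) (⊤ : SimpleGraph (Fin m)))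
      (({((⟨0, by omega⟩ : Fin n), (⟨0, by omega⟩ : Fin m)),
         (⟨1, by omega⟩, ⟨1, by omega⟩),
         (⟨2, by omega⟩, ⟨2, by omega⟩),
         (⟨3, by omega⟩, ⟨3, by omega⟩)} : Set (Fin n × Fin m))ᶜ) ∧
    n * m - 4 ≤ muTotal (directProd (⊤ : SimpleGraph (Fin n)) (⊤ : SimpleGraph (Fin m))) := by
  set s : Finset (Fin n × Fin m) :=
    {((⟨0, by omega⟩ : Fin n), (⟨0, by omega⟩ : Fin m)), (⟨1, by omega⟩, ⟨1, by omega⟩),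
      (⟨2, by omega⟩, ⟨2, by omega⟩), (⟨3, by omega⟩, ⟨3, by omega⟩)}
  have hcoe : (s : Set (Fin n × Fin m)) = {(⟨0, by omega⟩, ⟨0, by omega⟩),
      (⟨1, by omega⟩, ⟨1, by omega⟩), (⟨2, by omega⟩, ⟨2, by omega⟩),
      (⟨3, by omega⟩, ⟨3, by omega⟩)} := by
    simp [s]
  have hclique : (directProd ⊤ ⊤).IsClique (s : Set (Fin n × Fin m)) := by
    simp [hcoe, SimpleGraph.IsClique, Set.pairwise_insert, directProd_top_adj]
  have hcard : s.card = 4 := by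
    simp [s, Finset.card_insert_of_notMem]
  have htotal := isTotalMutualVisSet_directProd_top_compl_clique hclique hcard.ge
  have hncard : (s : Set (Fin n × Fin m))ᶜ.ncard = n * m - 4 := by
    rw [Set.ncard_compl, Set.ncard_coe_finset, hcard, Nat.card_prod, Nat.card_fin, Nat.card_fin]
  rw [← hcoe]
  exact ⟨htotal, hncard ▸ le_muTotal htotal⟩

end MutualVisibility
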